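/- arXiv:1309.6041 — 9 statements merged into one kernel-verified Lean document; each statement's English description precedes it below -/
import Mathlib

section
/- Let α > 0 and β ≥ 0 be real numbers, and define f(x) = (α + βx)/(1 − e^{−x}) + x for x > 0. Then f is strictly convex on (0, ∞); in particular its second derivative f''(x) = e^x·(α(e^x + 1) + β(e^x(x−2) + x + 2))/(e^x − 1)^3 is strictly positive for all x > 0. -/
/-!
Writing `f(x) = (α + βx)/(1 - e^{-x}) + x`, a direct computation gives
`f''(x) = e^x (α(e^x + 1) + β g(x)) / (e^x - 1)^3` with `g(x) = e^x (x - 2) + x + 2`.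
For `x > 0` the denominator is positive and `α(e^x + 1) > 0`, so it remains to see `g ≥ 0` on
`[0, ∞)`: `g(0) = 0` and `g'(y) = e^y (y - 1) + 1 ≥ 0` since `e^y (1 - y) ≤ e^y e^{-y} = 1`.
Strict convexity then follows from the positivity of `f''`.
-/

open Real

lemma exp_mul_sub_two_add_add_two_nonneg {x : ℝ} (hx : 0 ≤ x) :
    0 ≤ exp x * (x - 2) + x + 2 := by
  have hderiv (y : ℝ) :
      HasDerivAt (fun x => exp x * (x - 2) + x + 2) (exp y * (y - 1) + 1) y := by
    refine ((((hasDerivAt_exp y).mul ((hasDerivAt_id' y).sub_const 2)).add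
      (hasDerivAt_id' y)).add_const 2).congr_deriv ?_
    ring
  have hmono : Monotone (fun x => exp x * (x - 2) + x + 2) := by
    refine monotone_of_deriv_nonneg (fun y => (hderiv y).differentiableAt) fun y => ?_
    rw [(hderiv y).deriv]
    have h := mul_le_mul_of_nonneg_left (add_one_le_exp (-y)) (exp_nonneg y)
    rw [← exp_add, add_neg_cancel, exp_zero] at h
    nlinarith
  simpa using hmono hx

lemma one_sub_exp_neg_pos {x : ℝ} (hx : 0 < x) : 0 < 1 - exp (-x) := by
  linarith [exp_lt_one_iff.mpr (neg_lt_zero.mpr hx)]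

lemma hasDerivAt_one_sub_exp_neg (x : ℝ) : HasDerivAt (fun x => 1 - exp (-x)) (exp (-x)) x := by
  simpa using ((hasDerivAt_neg x).exp).const_sub 1

section Delay

variable (α β : ℝ)

noncomputable def delay (x : ℝ) : ℝ := (α + β * x) / (1 - exp (-x)) + x

noncomputable def delayDeriv (x : ℝ) : ℝ :=
  (β * (1 - exp (-x)) - (α + β * x) * exp (-x)) / (1 - exp (-x)) ^ 2 + 1

lemma hasDerivAt_const_add_mul (x : ℝ) : HasDerivAt (fun x => α + β * x) β x := by
  simpa using ((hasDerivAt_id x).const_mul β).const_add α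

lemma hasDerivAt_delay {x : ℝ} (hx : 0 < x) : HasDerivAt (delay α β) (delayDeriv α β x) x :=
  ((hasDerivAt_const_add_mul α β x).div (hasDerivAt_one_sub_exp_neg x)
    (one_sub_exp_neg_pos hx).ne').add (hasDerivAt_id x)

noncomputable def delaySecondDeriv (x : ℝ) : ℝ :=
  exp x * (α * (exp x + 1) + β * (exp x * (x - 2) + x + 2)) / (exp x - 1) ^ 3

lemma hasDerivAt_delayDeriv {x : ℝ} (hx : 0 < x) :
    HasDerivAt (delayDeriv α β) (delaySecondDeriv α β x) x := by
  have hnum : HasDerivAt (fun x => β * (1 - exp (-x)) - (α + β * x) * exp (-x)) _ x :=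
    ((hasDerivAt_one_sub_exp_neg x).const_mul β).sub
      ((hasDerivAt_const_add_mul α β x).mul (hasDerivAt_neg x).exp)
  have hden : HasDerivAt (fun x => (1 - exp (-x)) ^ 2) _ x :=
    (hasDerivAt_one_sub_exp_neg x).pow 2
  refine ((hnum.div hden (pow_ne_zero 2 (one_sub_exp_neg_pos hx).ne')).add_const 1).congr_deriv
    ?_
  have hexp : exp x - 1 ≠ 0 := (sub_pos.mpr (one_lt_exp_iff.mpr hx)).ne'
  have hexp0 : exp x ≠ 0 := (exp_pos x).ne'
  norm_num only [delaySecondDeriv, exp_neg]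
  field_simp
  ring

lemma deriv_deriv_delay {x : ℝ} (hx : 0 < x) :
    deriv (deriv (delay α β)) x = delaySecondDeriv α β x := by
  have hderiv : deriv (delay α β) =ᶠ[nhds x] delayDeriv α β := by
    filter_upwards [Ioi_mem_nhds hx] with y hy
    exact (hasDerivAt_delay α β hy).deriv
  rw [hderiv.deriv_eq, (hasDerivAt_delayDeriv α β hx).deriv]

variable {α β}

lemma delaySecondDeriv_pos (hα : 0 < α) (hβ : 0 ≤ β) {x : ℝ} (hx : 0 < x) :
    0 < delaySecondDeriv α β x := by
  have hexp : 0 < exp x - 1 := sub_pos.mpr (one_lt_exp_iff.mpr hx)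
  have hg := mul_nonneg hβ (exp_mul_sub_two_add_add_two_nonneg hx.le)
  unfold delaySecondDeriv
  positivity

end Delay

/-- For `α > 0` and `β ≥ 0`, the function `f(x) = (α + βx)/(1 - e^{-x}) + x` is strictly
convex on `(0, ∞)`; in particular its second derivative equals
`e^x (α(e^x + 1) + β(e^x(x-2) + x + 2)) / (e^x - 1)^3` and is strictly positive on `(0, ∞)`. -/
theorem stmt_4 (α β : ℝ) (hα : 0 < α) (hβ : 0 ≤ β) :
    StrictConvexOn ℝ (Set.Ioi (0 : ℝ))
      (fun x => (α + β * x) / (1 - Real.exp (-x)) + x) ∧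
    ∀ x : ℝ, 0 < x →
      deriv (deriv (fun x => (α + β * x) / (1 - Real.exp (-x)) + x)) x =
        Real.exp x * (α * (Real.exp x + 1) + β * (Real.exp x * (x - 2) + x + 2)) /
          (Real.exp x - 1) ^ 3 ∧
      0 < deriv (deriv (fun x => (α + β * x) / (1 - Real.exp (-x)) + x)) x := by
  have hpos {x : ℝ} (hx : 0 < x) : 0 < deriv (deriv (delay α β)) x := by
    rw [deriv_deriv_delay α β hx]
    exact delaySecondDeriv_pos hα hβ hx
  refine ⟨strictConvexOn_of_deriv2_pos (convex_Ioi 0) ?_ ?_,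
    fun x hx => ⟨deriv_deriv_delay α β hx, hpos hx⟩⟩
  · exact fun x hx => (hasDerivAt_delay α β hx).continuousAt.continuousWithinAt
  · intro x hx
    rw [interior_Ioi] at hx
    exact hpos hx
end

section
/- Let α > 0 and β ∈ (−1, 0) be real numbers, and define g(x) = α(e^x + 1) + β(e^x(x − 2) + x + 2) for x ≥ 0. Then g(0) = 2α > 0, g(x) → −∞ as x → ∞, and there exists a unique x₀ > 0 with g(x₀) = 0; moreover g(x) > 0 for all x ∈ (0, x₀) and g(x) < 0 for all x ∈ (x₀, ∞). -/
/-!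
Factor `g(x) = (-β)(eˣ + 1)(α/(-β) - φ(x))` with `φ(x) = x - 2 tanh(x/2)`. Since
`φ' = tanh²(x/2) > 0` on `(0, ∞)`, `φ(0) = 0` and `φ(x) ≥ x - 2`, the function `φ` increases
strictly from `0` to `∞` on `[0, ∞)`, so it crosses the level `α/(-β) > 0` exactly once, at `x₀`;
the sign of `g` is the sign of `α/(-β) - φ`.
-/

open Filter Set

noncomputable def phi (x : ℝ) : ℝ := x - 2 * (Real.exp x - 1) / (Real.exp x + 1)

lemma phi_zero : phi 0 = 0 := by simp [phi]

lemma continuous_phi : Continuous phi := by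
  unfold phi
  exact continuous_id.sub <| Continuous.div (by fun_prop) (by fun_prop) fun x => by positivity

lemma hasDerivAt_phi (x : ℝ) :
    HasDerivAt phi ((Real.exp x - 1) ^ 2 / (Real.exp x + 1) ^ 2) x := by
  have hexp := Real.hasDerivAt_exp x
  have h : HasDerivAt phi _ x := (hasDerivAt_id' x).sub
    (((hexp.sub_const 1).const_mul 2).div (hexp.add_const 1) (by positivity))
  refine h.congr_deriv ?_
  field_simp
  ring

lemma strictMonoOn_phi : StrictMonoOn phi (Ici 0) := by
  refine strictMonoOn_of_deriv_pos (convex_Ici 0) continuous_phi.continuousOn fun x hx => ?_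
  rw [interior_Ici] at hx
  have : 0 < Real.exp x - 1 := by linarith [Real.one_lt_exp_iff.mpr hx]
  rw [(hasDerivAt_phi x).deriv]
  positivity

lemma tendsto_phi_atTop : Tendsto phi atTop atTop := by
  refine tendsto_atTop_mono (fun x => ?_) (tendsto_atTop_add_const_right _ (-2) tendsto_id)
  have : (Real.exp x - 1) / (Real.exp x + 1) ≤ 1 :=
    (div_le_one (by positivity)).mpr (by linarith)
  simp only [phi, mul_div_assoc, id]
  linarith

lemma StrictMonoOn.exists_unique_crossing {f : ℝ → ℝ} {a c : ℝ}
    (hcont : ContinuousOn f (Ici a)) (hmono : StrictMonoOn f (Ici a)) (hfa : f a < c)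
    (htop : Tendsto f atTop atTop) :
    ∃ x₀, a < x₀ ∧ f x₀ = c ∧ (∀ y, a < y → f y = c → y = x₀) ∧
      (∀ x ∈ Ioo a x₀, f x < c) ∧ ∀ x ∈ Ioi x₀, c < f x := by
  obtain ⟨b, hcb, hab⟩ := ((htop.eventually_ge_atTop c).and (eventually_ge_atTop a)).exists
  obtain ⟨x₀, hx₀, hfx₀⟩ :=
    intermediate_value_Icc hab (hcont.mono Icc_subset_Ici_self) ⟨hfa.le, hcb⟩
  have hax₀ : a < x₀ := hx₀.1.lt_of_ne (by rintro rfl; exact hfa.ne hfx₀)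
  have hx₀mem : x₀ ∈ Ici a := hax₀.le
  refine ⟨x₀, hax₀, hfx₀, fun y hy hfy => hmono.injOn hy.le hx₀mem (hfy.trans hfx₀.symm),
    fun x hx => hfx₀ ▸ hmono hx.1.le hx₀mem hx.2,
    fun x hx => hfx₀ ▸ hmono hx₀mem (hax₀.trans hx).le hx⟩

lemma factor_eq (α β x : ℝ) (hβ : β ≠ 0) :
    α * (Real.exp x + 1) + β * (Real.exp x * (x - 2) + x + 2) =
      (-β * (Real.exp x + 1)) * (α / -β - phi x) := by
  have : Real.exp x + 1 ≠ 0 := by positivity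
  simp only [phi]
  field_simp
  ring

/-- For `α > 0` and `β ∈ (-1, 0)`, the function `g(x) = α(e^x + 1) + β(e^x(x-2) + x + 2)`
satisfies `g(0) = 2α > 0`, tends to `-∞` as `x → ∞`, and has a unique positive zero `x₀`;
moreover `g > 0` on `(0, x₀)` and `g < 0` on `(x₀, ∞)`. -/
theorem stmt_5 (α β : ℝ) (hα : 0 < α) (hβ : β ∈ Set.Ioo (-1 : ℝ) 0) :
    (fun x : ℝ => α * (Real.exp x + 1) + β * (Real.exp x * (x - 2) + x + 2)) 0 = 2 * α ∧
    0 < 2 * α ∧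
    Tendsto (fun x : ℝ => α * (Real.exp x + 1) + β * (Real.exp x * (x - 2) + x + 2))
      atTop atBot ∧
    ∃ x₀ : ℝ, 0 < x₀ ∧
      α * (Real.exp x₀ + 1) + β * (Real.exp x₀ * (x₀ - 2) + x₀ + 2) = 0 ∧
      (∀ y : ℝ, 0 < y →
        α * (Real.exp y + 1) + β * (Real.exp y * (y - 2) + y + 2) = 0 → y = x₀) ∧
      (∀ x ∈ Set.Ioo 0 x₀,
        0 < α * (Real.exp x + 1) + β * (Real.exp x * (x - 2) + x + 2)) ∧
      (∀ x ∈ Set.Ioi x₀,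
        α * (Real.exp x + 1) + β * (Real.exp x * (x - 2) + x + 2) < 0) := by
  have hβ0 : 0 < -β := neg_pos.mpr hβ.2
  have hfactor (x : ℝ) := factor_eq α β x hβ.2.ne
  have hweight (x : ℝ) : 0 < -β * (Real.exp x + 1) := by positivity
  have hweight_top : Tendsto (fun x => -β * (Real.exp x + 1)) atTop atTop :=
    (tendsto_atTop_add_const_right _ 1 Real.tendsto_exp_atTop).const_mul_atTop hβ0
  have hlevel_bot : Tendsto (fun x => α / -β - phi x) atTop atBot :=
    tendsto_atBot_add_const_left _ _ (tendsto_neg_atTop_atBot.comp tendsto_phi_atTop)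
  obtain ⟨x₀, hx₀, hphix₀, huniq, hbelow, habove⟩ :=
    strictMonoOn_phi.exists_unique_crossing continuous_phi.continuousOn
      (phi_zero ▸ div_pos hα hβ0) tendsto_phi_atTop
  refine ⟨by norm_num; ring, by positivity,
    (hweight_top.atTop_mul_atBot₀ hlevel_bot).congr fun x => (hfactor x).symm,
    x₀, hx₀, by rw [hfactor, hphix₀, sub_self, mul_zero], fun y hy hgy => huniq y hy ?_,
    fun x hx => ?_, fun x hx => ?_⟩
  · rw [hfactor] at hgy
    linarith [(mul_eq_zero.mp hgy).resolve_left (hweight y).ne']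
  · rw [hfactor]
    exact mul_pos (hweight x) (sub_pos.mpr (hbelow x hx))
  · rw [hfactor]
    exact mul_neg_of_pos_of_neg (hweight x) (sub_neg.mpr (habove x hx))
end

section
/- Fix reals σ > 0, T_obs > 0 and T_tr > 0, and let T = T_obs + T_tr. Define f_N(λ) = 2/λ + (T − (σ T_obs/λ)(1 + e^{−σ T_obs}))/(1 − e^{−σ T_obs}) for λ > 0. Then f_N is strictly increasing on (0, ∞). -/
/-!
Clearing denominators, `f_N(λ) = T / (1 - e^{-c}) - (c (1 + e^{-c}) - 2 (1 - e^{-c})) / ((1 - e^{-c}) λ)`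
with `c = σ T_obs`, so `f_N` is increasing as soon as `c (1 + e^{-c}) > 2 (1 - e^{-c})`, i.e.
`tanh (c / 2) < c / 2`. That inequality holds because `g(x) = (x + 2) e^{-x} + x - 2` vanishes at
`0` and has derivative `1 - (x + 1) e^{-x} > 0` for `x > 0`.
-/

open Real Set

lemma add_one_mul_exp_neg_lt_one {x : ℝ} (hx : x ≠ 0) : (x + 1) * exp (-x) < 1 := by
  calc (x + 1) * exp (-x) < exp x * exp (-x) :=
        mul_lt_mul_of_pos_right (add_one_lt_exp hx) (exp_pos _)
    _ = 1 := by rw [← exp_add, add_neg_cancel, exp_zero]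

lemma hasDerivAt_add_two_mul_exp_neg_add_sub_two (x : ℝ) :
    HasDerivAt (fun x : ℝ => (x + 2) * exp (-x) + x - 2) (1 - (x + 1) * exp (-x)) x := by
  have hexp : HasDerivAt (fun x : ℝ => exp (-x)) (-exp (-x)) x := by
    simpa using (hasDerivAt_neg x).exp
  exact ((((hasDerivAt_id x).add_const 2).mul hexp).add (hasDerivAt_id x)).sub_const 2
    |>.congr_deriv (by simp only [id]; ring)

lemma two_mul_one_sub_exp_neg_lt {c : ℝ} (hc : 0 < c) :
    2 * (1 - exp (-c)) < c * (1 + exp (-c)) := by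
  have hmono : StrictMonoOn (fun x : ℝ => (x + 2) * exp (-x) + x - 2) (Ici 0) := by
    refine strictMonoOn_of_deriv_pos (convex_Ici 0) (by fun_prop) fun x hx => ?_
    rw [interior_Ici] at hx
    rw [(hasDerivAt_add_two_mul_exp_neg_add_sub_two x).deriv]
    linarith [add_one_mul_exp_neg_lt_one (ne_of_gt hx)]
  have := hmono self_mem_Ici hc.le hc
  simp only [neg_zero, exp_zero] at this
  linarith

lemma strictMonoOn_div_add_const {a : ℝ} (ha : a < 0) (b : ℝ) :
    StrictMonoOn (fun x : ℝ => a / x + b) (Ioi 0) := by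
  intro x hx y _ hxy
  have := div_lt_div_of_pos_left (neg_pos.mpr ha) hx hxy
  rw [neg_div, neg_div] at this
  linarith

theorem stmt_9_general (σ Tobs T : ℝ) (hσ : 0 < σ) (hTobs : 0 < Tobs) :
    StrictMonoOn
      (fun lam : ℝ =>
        2 / lam +
          (T - (σ * Tobs / lam) * (1 + Real.exp (-(σ * Tobs)))) /
            (1 - Real.exp (-(σ * Tobs))))
      (Set.Ioi 0) := by
  set c := σ * Tobs
  have hc : 0 < c := mul_pos hσ hTobs
  have hgap : 0 < 1 - exp (-c) := sub_pos.mpr (exp_lt_one_iff.mpr (neg_lt_zero.mpr hc))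
  have hcoef : (2 * (1 - exp (-c)) - c * (1 + exp (-c))) / (1 - exp (-c)) < 0 :=
    div_neg_of_neg_of_pos (by linarith [two_mul_one_sub_exp_neg_lt hc]) hgap
  convert strictMonoOn_div_add_const hcoef (T / (1 - exp (-c))) using 1
  funext lam
  field_simp
  ring

/-- For fixed `σ, T_obs, T_tr > 0` with `T = T_obs + T_tr`, the expected-delay function
`f_N(λ) = 2/λ + (T - (σ T_obs/λ)(1 + e^{-σ T_obs}))/(1 - e^{-σ T_obs})` is strictly
increasing on `(0, ∞)`. -/
theorem stmt_9 (σ Tobs Ttr T : ℝ) (hσ : 0 < σ) (hTobs : 0 < Tobs) (hTtr : 0 < Ttr)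
    (hT : T = Tobs + Ttr) :
    StrictMonoOn
      (fun lam : ℝ =>
        2 / lam +
          (T - (σ * Tobs / lam) * (1 + Real.exp (-(σ * Tobs)))) /
            (1 - Real.exp (-(σ * Tobs))))
      (Set.Ioi 0) :=
  stmt_9_general σ Tobs T hσ hTobs
end

section
/- Fix reals σ > 0, λ_max > σ, and T_tr > 0. Define G(T_obs) = 2/λ_max + ((T_obs + T_tr)·λ_max − σ·T_obs·(1 + e^{−σ T_obs}))/((1 − e^{−σ T_obs})·λ_max) for T_obs > 0. Then G is quasi-convex on (0, ∞), i.e., every sublevel set of G is convex. -/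
/-!
`G'` has the sign of `P = delayDerivNum`, and `P' = σ² e^{-σt} Q` where `Q = delayDerivNumFactor`
is concave with `Q 0 = λ T_tr ≥ 0`. Hence `Q` is nonnegative up to some point and nonpositive
afterwards: `P` first increases and then decreases towards its limit `λ - σ > 0`. So once `P` is
positive it stays positive, i.e. `G'` never changes sign from `+` to `-`, and by the mean value
theorem `G` cannot exceed both of its values at the ends of an interval anywhere inside it.
-/

open Real Set Filter Topology

theorem quasiconvexOn_of_hasDerivAt_of_pos_imp {s : Set ℝ} {f f' : ℝ → ℝ} (hs : Convex ℝ s)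
    (hf : ∀ x ∈ s, HasDerivAt f (f' x) x)
    (hf' : ∀ x ∈ s, ∀ y ∈ s, x ≤ y → 0 < f' x → 0 < f' y) : QuasiconvexOn ℝ s f := by
  intro r
  refine convex_iff_ordConnected.2 ⟨fun x ⟨hxs, hxr⟩ y ⟨hys, hyr⟩ z ⟨hxz, hzy⟩ => ?_⟩
  have hsub : ∀ {a b}, a ∈ s → b ∈ s → Icc a b ⊆ s := fun ha hb => hs.ordConnected.out ha hb
  have hzs : z ∈ s := hsub hxs hys ⟨hxz, hzy⟩
  refine ⟨hzs, not_lt.1 fun hrz => ?_⟩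
  have hxz' : x < z := hxz.lt_of_ne (by rintro rfl; linarith)
  have hzy' : z < y := hzy.lt_of_ne (by rintro rfl; linarith)
  have hcont : ∀ {a b}, a ∈ s → b ∈ s → ContinuousOn f (Icc a b) := fun ha hb t ht =>
    (hf t (hsub ha hb ht)).continuousAt.continuousWithinAt
  obtain ⟨ξ, hξ, hfξ⟩ := exists_hasDerivAt_eq_slope f f' hxz' (hcont hxs hzs)
    fun t ht => hf t (hsub hxs hzs (Ioo_subset_Icc_self ht))
  obtain ⟨η, hη, hfη⟩ := exists_hasDerivAt_eq_slope f f' hzy' (hcont hzs hys)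
    fun t ht => hf t (hsub hzs hys (Ioo_subset_Icc_self ht))
  have hξpos : 0 < f' ξ := hfξ ▸ div_pos (by linarith) (by linarith)
  have hηneg : f' η < 0 := hfη ▸ div_neg_of_neg_of_pos (by linarith) (by linarith)
  exact hηneg.not_gt <| hf' ξ (hsub hxs hzs (Ioo_subset_Icc_self hξ)) η
    (hsub hzs hys (Ioo_subset_Icc_self hη)) (hξ.2.trans hη.1).le hξpos

theorem min_le_of_hasDerivAt_mul_concaveOn {P Q w : ℝ → ℝ} {L c a b : ℝ}
    (hP : ∀ t, HasDerivAt P (w t * Q t) t) (hw : ∀ t, 0 ≤ w t) (hQ : ConcaveOn ℝ univ Q)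
    (hQc : 0 ≤ Q c) (hL : Tendsto P atTop (𝓝 L)) (hca : c ≤ a) (hab : a ≤ b) :
    min (P a) L ≤ P b := by
  have hQ_nonneg : ∀ {d t}, 0 ≤ Q d → c ≤ t → t ≤ d → 0 ≤ Q t := fun hQd hct htd =>
    (le_min hQc hQd).trans <| hQ.ge_on_segment (mem_univ _) (mem_univ _)
      (by rw [segment_eq_Icc (hct.trans htd)]; exact ⟨hct, htd⟩)
  have hPcont : Continuous P := continuous_iff_continuousAt.2 fun t => (hP t).continuousAt
  by_cases hQb : 0 ≤ Q b
  · have hmono : MonotoneOn P (Icc a b) :=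
      monotoneOn_of_hasDerivWithinAt_nonneg (convex_Icc a b) hPcont.continuousOn
        (fun t _ => (hP t).hasDerivWithinAt) fun t ht => by
          rw [interior_Icc] at ht
          exact mul_nonneg (hw t) (hQ_nonneg hQb (hca.trans ht.1.le) ht.2.le)
    exact min_le_left _ _ |>.trans (hmono ⟨le_rfl, hab⟩ ⟨hab, le_rfl⟩ hab)
  · have hanti : AntitoneOn P (Ici b) :=
      antitoneOn_of_hasDerivWithinAt_nonpos (convex_Ici b) hPcont.continuousOn
        (fun t _ => (hP t).hasDerivWithinAt) fun t ht => by
          rw [interior_Ici] at ht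
          refine mul_nonpos_of_nonneg_of_nonpos (hw t) (not_lt.1 fun hQt => hQb ?_)
          exact hQ_nonneg hQt.le (hca.trans hab) ht.le
    exact min_le_right _ _ |>.trans <| le_of_tendsto hL <|
      (eventually_ge_atTop b).mono fun t hbt => hanti self_mem_Ici hbt hbt

namespace CyclicPolicy

noncomputable def delay (σ l Ttr T : ℝ) : ℝ :=
  2 / l + ((T + Ttr) * l - σ * T * (1 + exp (-(σ * T)))) / ((1 - exp (-(σ * T))) * l)

noncomputable def delayDerivNum (σ l Ttr t : ℝ) : ℝ :=
  (l - σ) * (1 - exp (-(σ * t))) - σ * exp (-(σ * t)) + σ * exp (-(σ * t)) ^ 2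
    + σ * (2 * σ - l) * t * exp (-(σ * t)) - σ * l * Ttr * exp (-(σ * t))

noncomputable def delayDerivNumFactor (σ l Ttr t : ℝ) : ℝ :=
  2 * (1 - exp (-(σ * t))) + (l - 2 * σ) * t + l * Ttr

theorem hasDerivAt_exp_neg_mul (σ t : ℝ) :
    HasDerivAt (fun x => exp (-(σ * x))) (-σ * exp (-(σ * t))) t := by
  simpa [mul_comm] using ((hasDerivAt_id t).const_mul σ).neg.exp

theorem hasDerivAt_delay {σ l Ttr t : ℝ} (hσ : σ ≠ 0) (hl : l ≠ 0) (ht : t ≠ 0) :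
    HasDerivAt (delay σ l Ttr)
      (delayDerivNum σ l Ttr t / ((1 - exp (-(σ * t))) ^ 2 * l)) t := by
  have hE := hasDerivAt_exp_neg_mul σ t
  have hden : 1 - exp (-(σ * t)) ≠ 0 := by
    rw [sub_ne_zero, ne_comm, Ne, exp_eq_one_iff, neg_eq_zero]
    exact mul_ne_zero hσ ht
  have hN := (((hasDerivAt_id t).add_const Ttr).mul_const l).sub
    (((hasDerivAt_id t).const_mul σ).mul ((hasDerivAt_const t 1).add hE))
  have hD := ((hasDerivAt_const t 1).sub hE).mul_const l
  refine ((hN.div hD (mul_ne_zero hden hl)).const_add (2 / l)).congr_deriv ?_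
  rw [zero_add, div_eq_div_iff (by positivity) (by positivity)]
  simp only [delayDerivNum, Pi.add_apply, Pi.sub_apply, Pi.mul_apply, id]
  ring

theorem hasDerivAt_delayDerivNum (σ l Ttr t : ℝ) :
    HasDerivAt (delayDerivNum σ l Ttr)
      (σ ^ 2 * exp (-(σ * t)) * delayDerivNumFactor σ l Ttr t) t := by
  have hE := hasDerivAt_exp_neg_mul σ t
  have h := ((((((hasDerivAt_const t 1).sub hE).const_mul (l - σ)).sub (hE.const_mul σ)).add
    ((hE.pow 2).const_mul σ)).add (((hasDerivAt_id t).const_mul (σ * (2 * σ - l))).mul hE)).sub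
    (hE.const_mul (σ * l * Ttr))
  refine h.congr_deriv ?_
  simp only [delayDerivNumFactor, id]
  ring

theorem tendsto_delayDerivNum {σ : ℝ} (l Ttr : ℝ) (hσ : 0 < σ) :
    Tendsto (delayDerivNum σ l Ttr) atTop (𝓝 (l - σ)) := by
  have hE : Tendsto (fun t => exp (-(σ * t))) atTop (𝓝 0) :=
    tendsto_exp_atBot.comp <| tendsto_neg_atTop_atBot.comp <| tendsto_id.const_mul_atTop hσ
  have htE : Tendsto (fun t => t * exp (-(σ * t))) atTop (𝓝 0) := by
    simpa using tendsto_rpow_mul_exp_neg_mul_atTop_nhds_zero 1 σ hσ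
  have h := ((((((tendsto_const_nhds (x := (1 : ℝ))).sub hE).const_mul (l - σ)).sub
    (hE.const_mul σ)).add ((hE.pow 2).const_mul σ)).add (htE.const_mul (σ * (2 * σ - l)))).sub
    (hE.const_mul (σ * l * Ttr))
  rw [show (l - σ) * (1 - 0) - σ * 0 + σ * 0 ^ 2 + σ * (2 * σ - l) * 0 - σ * l * Ttr * 0
    = l - σ by ring] at h
  exact h.congr fun t => by simp only [delayDerivNum]; ring

theorem concaveOn_delayDerivNumFactor (σ l Ttr : ℝ) :
    ConcaveOn ℝ univ (delayDerivNumFactor σ l Ttr) := by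
  refine ⟨convex_univ, fun x _ y _ a b ha hb hab => ?_⟩
  have h := convexOn_exp.2 (mem_univ (-(σ * x))) (mem_univ (-(σ * y))) ha hb hab
  simp only [smul_eq_mul] at h ⊢
  obtain rfl : b = 1 - a := by linarith
  rw [show a * -(σ * x) + (1 - a) * -(σ * y) = -(σ * (a * x + (1 - a) * y)) by ring] at h
  simp only [delayDerivNumFactor]
  linear_combination 2 * h

end CyclicPolicy

open CyclicPolicy in
/-- For fixed `σ > 0`, `λ_max > σ` and `T_tr > 0`, the function
`G(T_obs) = 2/λ_max + ((T_obs + T_tr) λ_max - σ T_obs (1 + e^{-σ T_obs})) / ((1 - e^{-σ T_obs}) λ_max)`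
is quasi-convex on `(0, ∞)`. -/
theorem stmt_10 (σ lamMax Ttr : ℝ) (hσ : 0 < σ) (hlam : σ < lamMax) (hTtr : 0 < Ttr) :
    QuasiconvexOn ℝ (Set.Ioi (0 : ℝ))
      (fun Tobs =>
        2 / lamMax +
          ((Tobs + Ttr) * lamMax - σ * Tobs * (1 + Real.exp (-(σ * Tobs)))) /
            ((1 - Real.exp (-(σ * Tobs))) * lamMax)) := by
  have hl : 0 < lamMax := hσ.trans hlam
  have hden : ∀ t > 0, 0 < (1 - exp (-(σ * t))) ^ 2 * lamMax := fun t ht =>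
    mul_pos (pow_pos (sub_pos.2 (exp_lt_one_iff.2 (neg_neg_of_pos (mul_pos hσ ht)))) 2) hl
  refine quasiconvexOn_of_hasDerivAt_of_pos_imp (f := delay σ lamMax Ttr) (convex_Ioi 0)
    (fun t ht => hasDerivAt_delay hσ.ne' hl.ne' (ne_of_gt ht)) fun a ha b hb hab hPa => ?_
  rw [div_pos_iff_of_pos_right (hden a ha)] at hPa
  rw [div_pos_iff_of_pos_right (hden b hb)]
  have hQ₀ : 0 ≤ delayDerivNumFactor σ lamMax Ttr 0 := by
    simpa [delayDerivNumFactor] using mul_nonneg hl.le hTtr.le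
  refine (lt_min hPa (sub_pos.2 hlam)).trans_le <| min_le_of_hasDerivAt_mul_concaveOn
    (hasDerivAt_delayDerivNum σ lamMax Ttr) (fun t => by positivity)
    (concaveOn_delayDerivNumFactor σ lamMax Ttr) hQ₀ (tendsto_delayDerivNum lamMax Ttr hσ)
    (le_of_lt ha) hab
end

section
/- Fix reals λ > 0 and T > 0, and define h(t) = 2/λ + (T − t − t·e^{−λ t})/(1 − e^{−λ t}) for t ∈ (0, T). Then h is strictly decreasing on (0, T). -/
open Real Set

/-! Writing `u = e^{-λt}`, the derivative of `h` is `(u² - 1 + λu(2t - T)) / (1 - u)²`.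
Since `2t - T < t`, its numerator is below `u(u + λt) - 1 ≤ e^{-λt}(1 + λt) - 1 ≤ 0`. -/

theorem exp_neg_mul_exp_neg_add_le_one {s : ℝ} (hs : 0 ≤ s) : exp (-s) * (exp (-s) + s) ≤ 1 :=
  calc exp (-s) * (exp (-s) + s)
      ≤ exp (-s) * exp s := by
        gcongr
        linarith [exp_le_one_iff.mpr (neg_nonpos.mpr hs), add_one_le_exp s]
    _ = 1 := by rw [← exp_add, neg_add_cancel, exp_zero]

theorem hasDerivAt_sub_mul_one_add_exp_neg_div {lam T t : ℝ} (hlt : lam * t ≠ 0) :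
    HasDerivAt (fun t => (T - t - t * exp (-(lam * t))) / (1 - exp (-(lam * t))))
      ((exp (-(lam * t)) ^ 2 - 1 + lam * exp (-(lam * t)) * (2 * t - T)) /
        (1 - exp (-(lam * t))) ^ 2) t := by
  have hu : HasDerivAt (fun t => exp (-(lam * t))) (-lam * exp (-(lam * t))) t :=
    ((hasDerivAt_id' t).const_mul lam).fun_neg.exp.congr_deriv (by ring)
  have hden : 1 - exp (-(lam * t)) ≠ 0 := by
    rwa [sub_ne_zero, ne_comm, Ne, exp_eq_one_iff, neg_eq_zero]
  have hnum := ((hasDerivAt_const t T).fun_sub (hasDerivAt_id' t)).fun_sub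
    ((hasDerivAt_id' t).fun_mul hu)
  refine (hnum.fun_div ((hasDerivAt_const t 1).fun_sub hu) hden).congr_deriv ?_
  ring

theorem exp_neg_sq_sub_one_add_mul_lt_zero {lam T t : ℝ} (hlam : 0 < lam) (ht : 0 ≤ t)
    (htT : t < T) :
    exp (-(lam * t)) ^ 2 - 1 + lam * exp (-(lam * t)) * (2 * t - T) < 0 := by
  have hkey := exp_neg_mul_exp_neg_add_le_one (mul_nonneg hlam.le ht)
  have hlin : lam * exp (-(lam * t)) * (2 * t - T) < lam * exp (-(lam * t)) * t :=
    mul_lt_mul_of_pos_left (by linarith) (mul_pos hlam (exp_pos _))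
  linarith

theorem stmt_11_general (lam T : ℝ) (hlam : 0 < lam) :
    StrictAntiOn
      (fun t : ℝ =>
        2 / lam + (T - t - t * Real.exp (-(lam * t))) / (1 - Real.exp (-(lam * t))))
      (Set.Ioo 0 T) := by
  refine StrictAntiOn.const_add (strictAntiOn_of_deriv_neg (convex_Ioo 0 T) ?_ ?_) (2 / lam)
  · exact fun t ht => (hasDerivAt_sub_mul_one_add_exp_neg_div (T := T)
      (mul_pos hlam ht.1).ne').continuousAt.continuousWithinAt
  · intro t ht
    rw [interior_Ioo] at ht
    have hlt : 0 < lam * t := mul_pos hlam ht.1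
    rw [(hasDerivAt_sub_mul_one_add_exp_neg_div (T := T) hlt.ne').deriv]
    have hu : exp (-(lam * t)) < 1 := exp_lt_one_iff.mpr (neg_neg_of_pos hlt)
    exact div_neg_of_neg_of_pos (exp_neg_sq_sub_one_add_mul_lt_zero hlam ht.1.le ht.2)
      (pow_pos (sub_pos.mpr hu) 2)

/-- For fixed `λ > 0` and `T > 0`, the expected delay
`h(t) = 2/λ + (T - t - t e^{-λt})/(1 - e^{-λt})` is strictly decreasing on `(0, T)`. -/
theorem stmt_11 (lam T : ℝ) (hlam : 0 < lam) (hT : 0 < T) :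
    StrictAntiOn
      (fun t : ℝ =>
        2 / lam + (T - t - t * Real.exp (-(lam * t))) / (1 - Real.exp (-(lam * t))))
      (Set.Ioo 0 T) :=
  stmt_11_general lam T hlam
end

section
/- Let n ≥ 2 be an integer, let λ_1, …, λ_n > 0 and T_obs > 0 be reals, and let c ∈ (0, 1/n). Suppose t_1, …, t_n > 0 satisfy λ_2 t_2 = λ_3 t_3 = ⋯ = λ_n t_n, ∑_{i=1}^n t_i = T_obs, and λ_1 t_1 = c · ∑_{j=1}^n λ_j t_j. Then λ_1 t_1 = c(n−1)·T_obs / ((1−c)·∑_{i=2}^n (1/λ_i) + c(n−1)·(1/λ_1)). -/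
/-! If every station other than `i₀` carries the same share `w = λᵢ tᵢ`, then `tᵢ = w / λᵢ`, so
`T = t₀ + w ∑ᵢ 1/λᵢ` and `λ₀ t₀ = c (λ₀ t₀ + (n - 1) w)`; eliminating `w` between these two
linear relations gives the closed form. -/

open Finset

section EqualShares

variable {ι : Type*} [Fintype ι] [DecidableEq ι] {lam t : ι → ℝ} {i₀ : ι} {w : ℝ}

theorem sum_mul_eq_of_forall_ne (h : ∀ i ≠ i₀, lam i * t i = w) :
    ∑ i, lam i * t i = lam i₀ * t i₀ + ((Fintype.card ι : ℝ) - 1) * w := by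
  rw [← add_sum_erase _ _ (mem_univ i₀), sum_congr rfl fun i hi => h i (ne_of_mem_erase hi),
    sum_const, card_erase_of_mem (mem_univ _), card_univ, nsmul_eq_mul,
    Nat.cast_sub (Fintype.card_pos_iff.2 ⟨i₀⟩), Nat.cast_one]

theorem sum_eq_add_mul_sum_inv_of_forall_ne (hlam : ∀ i, lam i ≠ 0)
    (h : ∀ i ≠ i₀, lam i * t i = w) :
    ∑ i, t i = t i₀ + w * ∑ i ∈ univ.erase i₀, 1 / lam i := by
  rw [← add_sum_erase _ _ (mem_univ i₀), mul_sum]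
  congr 1
  refine sum_congr rfl fun i hi => ?_
  rw [← h i (ne_of_mem_erase hi)]
  field_simp [hlam i]

end EqualShares

theorem mul_eq_div_of_share {l s A N T c w : ℝ} (hl : l ≠ 0)
    (hD : (1 - c) * A + c * N * (1 / l) ≠ 0)
    (hshare : l * s = c * (l * s + N * w)) (hT : T = s + w * A) :
    l * s = c * N * T / ((1 - c) * A + c * N * (1 / l)) := by
  rw [eq_div_iff hD, hT]
  field_simp
  linear_combination A * hshare

/-- Closed form for the expected number of observations per cycle at station `1`
(here index `0`) of an unbalanced cyclic policy in which station `1` receives fraction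
`c < 1/n` of the total expected observations and all other stations receive equal
fractions. -/
theorem stmt_12 (n : ℕ) (hn : 2 ≤ n) (lam t : Fin n → ℝ) (Tobs c : ℝ)
    (hlam : ∀ i, 0 < lam i)
    (hc : c ∈ Set.Ioo (0 : ℝ) (1 / n))
    (heq : ∀ i j : Fin n, i ≠ ⟨0, by omega⟩ → j ≠ ⟨0, by omega⟩ →
      lam i * t i = lam j * t j)
    (hsum : ∑ i, t i = Tobs)
    (hfrac : lam ⟨0, by omega⟩ * t ⟨0, by omega⟩ = c * ∑ j, lam j * t j) :
    lam ⟨0, by omega⟩ * t ⟨0, by omega⟩ =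
      c * ((n : ℝ) - 1) * Tobs /
        ((1 - c) * (∑ i ∈ Finset.univ.erase (⟨0, by omega⟩ : Fin n), 1 / lam i) +
          c * ((n : ℝ) - 1) * (1 / lam ⟨0, by omega⟩)) := by
  obtain ⟨hc₀, hcn⟩ := hc
  set i₀ : Fin n := ⟨0, by omega⟩
  set i₁ : Fin n := ⟨1, by omega⟩
  have hi₁ : i₁ ∈ univ.erase i₀ := mem_erase.2 ⟨by simp [i₀, i₁, Fin.ext_iff], mem_univ _⟩
  have hshares (i : Fin n) (hi : i ≠ i₀) : lam i * t i = lam i₁ * t i₁ :=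
    heq i i₁ hi (ne_of_mem_erase hi₁)
  have hn₂ : (2 : ℝ) ≤ n := by exact_mod_cast hn
  have hc₁ : c < 1 := hcn.trans_le <| by rw [div_le_one (by linarith)]; linarith
  have hA : 0 < ∑ i ∈ univ.erase i₀, 1 / lam i :=
    sum_pos (fun i _ => one_div_pos.2 (hlam i)) ⟨i₁, hi₁⟩
  have hD : 0 < (1 - c) * (∑ i ∈ univ.erase i₀, 1 / lam i) + c * ((n : ℝ) - 1) * (1 / lam i₀) :=
    add_pos (mul_pos (sub_pos.2 hc₁) hA)
      (mul_pos (mul_pos hc₀ (by linarith)) (one_div_pos.2 (hlam i₀)))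
  refine mul_eq_div_of_share (hlam i₀).ne' hD.ne' ?_
    (hsum.symm.trans (sum_eq_add_mul_sum_inv_of_forall_ne (fun i => (hlam i).ne') hshares))
  simpa [sum_mul_eq_of_forall_ne hshares] using hfrac
end

section
/- Fix reals σ > 0, T_obs > 0 and T_tr > 0, set T = T_obs + T_tr and x = σT_obs, and define f_N(λ) = 2/λ + (T − (σ T_obs/λ)(1 + e^{−x}))/(1 − e^{−x}) for λ > 0. Then for every λ ≥ 2σ, one has 0 < λ·f_N'(λ)/f_N(λ) < 1; explicitly, λ·f_N'(λ)/f_N(λ) = −(2 − 2e^{−x} − x(1 + e^{−x}))/(2 − 2e^{−x} − x(1 + e^{−x}) + λT), and this quantity lies strictly between 0 and 1. -/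
/-!
With `E = e^{-x}` and `A = 2 - 2E - x(1 + E)` one has `f_N(λ) = α/λ + β` with `α = A/(1 - E)` and
`β = T/(1 - E)`, and any such function has logarithmic sensitivity `λ f'/f = -α/(α + βλ)
= -A/(A + λT)`. The bounds then reduce to `-x < A < 0`: `A < 0` is `tanh (x/2) < x/2`, `A + x > 0`
is `(x + 2)e^{-x} < 2`, and `λ ≥ 2σ` gives `λT ≥ 2x > -2A`.
-/

open Real

lemma Real.two_mul_one_sub_exp_neg_lt_mul_one_add_exp_neg {x : ℝ} (hx : 0 < x) :
    2 * (1 - exp (-x)) < x * (1 + exp (-x)) := by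
  let g : ℝ → ℝ := fun s => s * (1 + exp (-s)) - 2 * (1 - exp (-s))
  have hg : StrictMonoOn g (Set.Ici 0) := by
    refine strictMonoOn_of_deriv_pos (convex_Ici 0) (by fun_prop) fun s hs => ?_
    rw [interior_Ici, Set.mem_Ioi] at hs
    have hderiv : HasDerivAt g (1 - (1 + s) * exp (-s)) s := by
      have he := (hasDerivAt_neg s).exp
      exact (((hasDerivAt_id' s).fun_mul ((hasDerivAt_const s 1).fun_add he)).fun_sub
        (((hasDerivAt_const s 1).fun_sub he).const_mul 2)).congr_deriv (by ring)
    have hlt : (1 + s) * exp (-s) < 1 := by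
      rw [exp_neg, ← div_eq_mul_inv, div_lt_one (exp_pos s), add_comm]
      exact add_one_lt_exp hs.ne'
    rw [hderiv.deriv]
    linarith
  simpa [g] using hg Set.self_mem_Ici hx.le hx

lemma Real.add_two_mul_exp_neg_lt_two {x : ℝ} (hx : 0 < x) : (x + 2) * exp (-x) < 2 := by
  rw [exp_neg, ← div_eq_mul_inv, div_lt_iff₀ (exp_pos x)]
  linarith [add_one_lt_exp hx.ne', one_lt_exp_iff.mpr hx]

lemma mul_deriv_div_add_const_div_self (a b : ℝ) {l : ℝ} (hl : l ≠ 0) :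
    l * deriv (fun t : ℝ => a / t + b) l / (a / l + b) = -a / (a + b * l) := by
  have hderiv : deriv (fun t : ℝ => a / t + b) l = -a / l ^ 2 := by simp [neg_div]
  rw [hderiv]
  rcases eq_or_ne (a + b * l) 0 with h | h
  · have : a / l + b = 0 := by field_simp; linarith
    simp [h, this]
  · field_simp

/-- Robustness with respect to the arrival rate: for the expected-delay function
`f_N(λ) = 2/λ + (T - (σ T_obs/λ)(1 + e^{-x}))/(1 - e^{-x})` with `x = σ T_obs` and
`T = T_obs + T_tr`, for every `λ ≥ 2σ` the logarithmic sensitivity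
`λ f_N'(λ)/f_N(λ)` equals `-(2 - 2e^{-x} - x(1+e^{-x}))/(2 - 2e^{-x} - x(1+e^{-x}) + λT)`
and lies strictly between `0` and `1`. -/
theorem stmt_15 (σ Tobs Ttr T x : ℝ) (hσ : 0 < σ) (hTobs : 0 < Tobs) (hTtr : 0 < Ttr)
    (hT : T = Tobs + Ttr) (hx : x = σ * Tobs) (lam : ℝ) (hlam : 2 * σ ≤ lam) :
    lam * deriv (fun l : ℝ =>
        2 / l + (T - (σ * Tobs / l) * (1 + Real.exp (-x))) / (1 - Real.exp (-x))) lam /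
      ((fun l : ℝ =>
        2 / l + (T - (σ * Tobs / l) * (1 + Real.exp (-x))) / (1 - Real.exp (-x))) lam) =
      -(2 - 2 * Real.exp (-x) - x * (1 + Real.exp (-x))) /
        (2 - 2 * Real.exp (-x) - x * (1 + Real.exp (-x)) + lam * T) ∧
    0 < lam * deriv (fun l : ℝ =>
        2 / l + (T - (σ * Tobs / l) * (1 + Real.exp (-x))) / (1 - Real.exp (-x))) lam /
      ((fun l : ℝ =>
        2 / l + (T - (σ * Tobs / l) * (1 + Real.exp (-x))) / (1 - Real.exp (-x))) lam) ∧
    lam * deriv (fun l : ℝ =>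
        2 / l + (T - (σ * Tobs / l) * (1 + Real.exp (-x))) / (1 - Real.exp (-x))) lam /
      ((fun l : ℝ =>
        2 / l + (T - (σ * Tobs / l) * (1 + Real.exp (-x))) / (1 - Real.exp (-x))) lam) <
      1 := by
  have hx0 : 0 < x := hx ▸ mul_pos hσ hTobs
  have hlam0 : 0 < lam := by linarith
  set E := exp (-x)
  set A := 2 - 2 * E - x * (1 + E)
  set f := fun l : ℝ => 2 / l + (T - (σ * Tobs / l) * (1 + E)) / (1 - E)
  have hE1 : 1 - E ≠ 0 := (sub_pos.2 (exp_lt_one_iff.2 (neg_neg_of_pos hx0))).ne'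
  have hf : f = fun l => A / (1 - E) / l + T / (1 - E) := by
    funext l
    simp only [f, A, ← hx]
    field_simp
    ring
  have hratio : lam * deriv f lam / f lam = -A / (A + lam * T) := by
    simp only [hf]
    rw [mul_deriv_div_add_const_div_self _ _ hlam0.ne']
    field_simp
  have hA : A < 0 := by linarith [two_mul_one_sub_exp_neg_lt_mul_one_add_exp_neg hx0]
  have hAx : 0 < A + x := by linarith [add_two_mul_exp_neg_lt_two hx0]
  have hlamT : 2 * x ≤ lam * T :=
    calc 2 * x = 2 * σ * Tobs := by rw [hx, mul_assoc]
      _ ≤ lam * Tobs := by gcongr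
      _ ≤ lam * T := by rw [hT]; gcongr; linarith
  refine ⟨hratio, ?_, ?_⟩ <;> rw [hratio]
  · exact div_pos (by linarith) (by linarith)
  · exact (div_lt_one (by linarith)).2 (by linarith)
end

section
/- Fix reals σ > 0, λ_max ≥ 2σ, and T_obs > 0, set x = σT_obs, and define F(T_tr) = 2/λ_max + ((T_obs + T_tr)·λ_max − σ·T_obs·(1 + e^{−x}))/((1 − e^{−x})·λ_max) for T_tr > 0. Then F'(T_tr) = 1/(1 − e^{−x}) > 0 and, for every T_tr > 0, one has 0 < T_tr·F'(T_tr)/F(T_tr) < 1. -/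
/-!
As a function of the travel time, the expected delay is affine, `F(T) = F(0) + T/(1 - e^{-x})`,
with positive slope because `x > 0`, and positive intercept because `λ_max ≥ 2σ > σ(1 + e^{-x})`.
The elasticity `T b / (a + T b)` of an affine function with positive intercept `a` and positive
slope `b` lies strictly between `0` and `1`.
-/

lemma elasticity_of_affine_pos_lt_one {a b t : ℝ} (ha : 0 < a) (hb : 0 < b) (ht : 0 < t) :
    0 < t * b / (a + t * b) ∧ t * b / (a + t * b) < 1 := by
  have htb : 0 < t * b := mul_pos ht hb
  exact ⟨div_pos htb (by linarith), (div_lt_one (by linarith)).mpr (by linarith)⟩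

section Delay

variable {c A d l e : ℝ}

lemma hasDerivAt_delay_s17 (hl : l ≠ 0) (t : ℝ) :
    HasDerivAt (fun s : ℝ => c + ((A + s) * l - d) / (e * l)) (1 / e) t := by
  have h := ((((hasDerivAt_id t).const_add A).mul_const l).sub_const d).div_const (e * l)
  exact (h.const_add c).congr_deriv (mul_div_mul_right 1 e hl)

lemma delay_eq_add_mul (hl : l ≠ 0) (he : e ≠ 0) (t : ℝ) :
    c + ((A + t) * l - d) / (e * l) = (c + (A * l - d) / (e * l)) + t * (1 / e) := by
  field_simp
  ring

end Delay

/-- Robustness with respect to the travel time: for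
`F(T_tr) = 2/λ_max + ((T_obs + T_tr) λ_max - σ T_obs (1 + e^{-x}))/((1 - e^{-x}) λ_max)`
with `x = σ T_obs`, `σ > 0`, `λ_max ≥ 2σ` and `T_obs > 0`, one has
`F'(T_tr) = 1/(1 - e^{-x}) > 0` and `0 < T_tr F'(T_tr)/F(T_tr) < 1` for all `T_tr > 0`. -/
theorem stmt_17 (σ lamMax Tobs x : ℝ) (hσ : 0 < σ) (hlam : 2 * σ ≤ lamMax)
    (hTobs : 0 < Tobs) (hx : x = σ * Tobs) :
    (∀ Ttr : ℝ, 0 < Ttr →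
      deriv (fun s : ℝ =>
          2 / lamMax +
            ((Tobs + s) * lamMax - σ * Tobs * (1 + Real.exp (-x))) /
              ((1 - Real.exp (-x)) * lamMax)) Ttr =
        1 / (1 - Real.exp (-x))) ∧
    0 < 1 / (1 - Real.exp (-x)) ∧
    ∀ Ttr : ℝ, 0 < Ttr →
      0 < Ttr * deriv (fun s : ℝ =>
            2 / lamMax +
              ((Tobs + s) * lamMax - σ * Tobs * (1 + Real.exp (-x))) /
                ((1 - Real.exp (-x)) * lamMax)) Ttr /
          ((fun s : ℝ =>
            2 / lamMax +
              ((Tobs + s) * lamMax - σ * Tobs * (1 + Real.exp (-x))) /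
                ((1 - Real.exp (-x)) * lamMax)) Ttr) ∧
      Ttr * deriv (fun s : ℝ =>
            2 / lamMax +
              ((Tobs + s) * lamMax - σ * Tobs * (1 + Real.exp (-x))) /
                ((1 - Real.exp (-x)) * lamMax)) Ttr /
          ((fun s : ℝ =>
            2 / lamMax +
              ((Tobs + s) * lamMax - σ * Tobs * (1 + Real.exp (-x))) /
                ((1 - Real.exp (-x)) * lamMax)) Ttr) < 1 := by
  set E := Real.exp (-x)
  have hE : E < 1 := Real.exp_lt_one_iff.mpr (by nlinarith [mul_pos hσ hTobs])
  have hgap : 0 < 1 - E := by linarith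
  have hl : 0 < lamMax := by linarith
  have hderiv (t : ℝ) := (hasDerivAt_delay_s17 (c := 2 / lamMax) (A := Tobs)
    (d := σ * Tobs * (1 + E)) (e := 1 - E) hl.ne' t).deriv
  have hintercept : 0 < 2 / lamMax + (Tobs * lamMax - σ * Tobs * (1 + E)) / ((1 - E) * lamMax) := by
    have hnum : 0 < Tobs * lamMax - σ * Tobs * (1 + E) := by
      nlinarith [mul_pos (mul_pos hσ hTobs) hgap, mul_le_mul_of_nonneg_left hlam hTobs.le]
    positivity
  refine ⟨fun t _ => hderiv t, one_div_pos.mpr hgap, fun t ht => ?_⟩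
  rw [hderiv]
  beta_reduce
  rw [delay_eq_add_mul hl.ne' hgap.ne']
  exact elasticity_of_affine_pos_lt_one hintercept (one_div_pos.mpr hgap) ht
end

section
/- Fix reals σ > 0 and λ_max ≥ 2σ, and define F(T_obs, T_tr) = 2/λ_max + ((T_obs + T_tr)·λ_max − σ·T_obs·(1 + e^{−σT_obs}))/((1 − e^{−σT_obs})·λ_max) for T_obs, T_tr > 0. Then for every T_tr > 0 and every ε > 0, the infimum over T_obs > 0 of F(T_obs, (1+ε)·T_tr) is at most (1+ε) times the infimum over T_obs > 0 of F(T_obs, T_tr). -/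
/-!
Pointwise in `T_obs`, scaling the travel time by `c ≥ 1` scales `F` by at most `c`:
`c · F(T, T_tr) - F(T, c · T_tr) = (c - 1) (2/λ + (Tλ - σT(1 + e^{-σT})) / ((1 - e^{-σT}) λ))`,
and `λ ≥ 2σ` makes the second term nonnegative. Since `F ≥ 0`, the infimum passes through the
pointwise bound.
-/

open Real Set

noncomputable def cyclicDelay (σ lam Ttr T : ℝ) : ℝ :=
  2 / lam + ((T + Ttr) * lam - σ * T * (1 + exp (-(σ * T)))) / ((1 - exp (-(σ * T))) * lam)

theorem ciInf_le_mul_ciInf {ι : Type*} {f g : ι → ℝ} {c : ℝ} (hf : BddBelow (range f))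
    (hc : 0 ≤ c) (h : ∀ i, f i ≤ c * g i) : ⨅ i, f i ≤ c * ⨅ i, g i := by
  rw [Real.mul_iInf_of_nonneg hc]
  exact ciInf_mono hf h

section

variable {σ lam T : ℝ}

theorem exp_neg_mul_lt_one (hσ : 0 < σ) (hT : 0 < T) : exp (-(σ * T)) < 1 :=
  exp_lt_one_iff.mpr (neg_lt_zero.mpr (mul_pos hσ hT))

theorem mul_one_add_exp_neg_le (hσ : 0 < σ) (hlam : 2 * σ ≤ lam) (hT : 0 < T) :
    σ * T * (1 + exp (-(σ * T))) ≤ T * lam := by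
  have he : exp (-(σ * T)) ≤ 1 := (exp_neg_mul_lt_one hσ hT).le
  have hσT : 0 ≤ σ * T := (mul_pos hσ hT).le
  calc σ * T * (1 + exp (-(σ * T))) ≤ σ * T * 2 := by gcongr; linarith
    _ = T * (2 * σ) := by ring
    _ ≤ T * lam := by gcongr

theorem cyclicDelay_nonneg {Ttr : ℝ} (hσ : 0 < σ) (hlam : 2 * σ ≤ lam) (hT : 0 < T)
    (hTtr : 0 ≤ Ttr) : 0 ≤ cyclicDelay σ lam Ttr T := by
  have hlam0 : 0 < lam := by linarith
  have hden : 0 < 1 - exp (-(σ * T)) := sub_pos.mpr (exp_neg_mul_lt_one hσ hT)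
  have hnum : 0 ≤ (T + Ttr) * lam - σ * T * (1 + exp (-(σ * T))) := by
    nlinarith [mul_one_add_exp_neg_le hσ hlam hT]
  unfold cyclicDelay
  positivity

theorem cyclicDelay_mul_le {c : ℝ} (Ttr : ℝ) (hσ : 0 < σ) (hlam : 2 * σ ≤ lam) (hT : 0 < T)
    (hc : 1 ≤ c) : cyclicDelay σ lam (c * Ttr) T ≤ c * cyclicDelay σ lam Ttr T := by
  have hlam0 : 0 < lam := by linarith
  have hden : 0 < 1 - exp (-(σ * T)) := sub_pos.mpr (exp_neg_mul_lt_one hσ hT)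
  have hgap : c * cyclicDelay σ lam Ttr T - cyclicDelay σ lam (c * Ttr) T =
      (c - 1) * (2 / lam +
        (T * lam - σ * T * (1 + exp (-(σ * T)))) / ((1 - exp (-(σ * T))) * lam)) := by
    unfold cyclicDelay
    field_simp
    ring
  have hnum : 0 ≤ T * lam - σ * T * (1 + exp (-(σ * T))) :=
    sub_nonneg.mpr (mul_one_add_exp_neg_le hσ hlam hT)
  have hc' : 0 ≤ c - 1 := sub_nonneg.mpr hc
  rw [← sub_nonneg, hgap]
  positivity

end

/-- PTAS key inequality: for
`F(T_obs, T_tr) = 2/λ_max + ((T_obs + T_tr) λ_max - σ T_obs (1 + e^{-σ T_obs}))/((1 - e^{-σ T_obs}) λ_max)`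
with `σ > 0` and `λ_max ≥ 2σ`, for every `T_tr > 0` and `ε > 0`, the infimum over
`T_obs > 0` of `F(T_obs, (1+ε) T_tr)` is at most `(1+ε)` times the infimum over
`T_obs > 0` of `F(T_obs, T_tr)`. -/
theorem stmt_18 (σ lamMax : ℝ) (hσ : 0 < σ) (hlam : 2 * σ ≤ lamMax) :
    ∀ Ttr : ℝ, 0 < Ttr → ∀ ε : ℝ, 0 < ε →
      (⨅ Tobs : Set.Ioi (0 : ℝ),
        (2 / lamMax +
          (((Tobs : ℝ) + (1 + ε) * Ttr) * lamMax -
              σ * (Tobs : ℝ) * (1 + Real.exp (-(σ * (Tobs : ℝ))))) /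
            ((1 - Real.exp (-(σ * (Tobs : ℝ)))) * lamMax))) ≤
      (1 + ε) *
      (⨅ Tobs : Set.Ioi (0 : ℝ),
        (2 / lamMax +
          (((Tobs : ℝ) + Ttr) * lamMax -
              σ * (Tobs : ℝ) * (1 + Real.exp (-(σ * (Tobs : ℝ))))) /
            ((1 - Real.exp (-(σ * (Tobs : ℝ)))) * lamMax))) := by
  intro Ttr hTtr ε hε
  change ⨅ T : Ioi (0 : ℝ), cyclicDelay σ lamMax ((1 + ε) * Ttr) T ≤
    (1 + ε) * ⨅ T : Ioi (0 : ℝ), cyclicDelay σ lamMax Ttr T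
  have hTtr' : 0 ≤ (1 + ε) * Ttr := by positivity
  refine ciInf_le_mul_ciInf ⟨0, ?_⟩ (by linarith) fun T => ?_
  · rintro _ ⟨T, rfl⟩
    exact cyclicDelay_nonneg hσ hlam T.2 hTtr'
  · exact cyclicDelay_mul_le Ttr hσ hlam T.2 (by linarith)
end
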